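/- arXiv:1703.02912 — 3 statements merged into one kernel-verified Lean document; each statement's English description precedes it below -/
import Mathlib

section
/- Constant dwell-time stability (Theorem 2): Let T̄ > 0 and suppose there exist ε > 0 and a bounded, continuously differentiable matrix-valued function S : [0,T̄] × 𝒫 → Sⁿ with S(τ,θ) positive definite for every (τ,θ) ∈ [0,T̄] × 𝒫, such that (i) ∂_τ S(τ,θ) + ∂_ρ S(τ,θ)μ + A(θ)ᵀS(τ,θ) + S(τ,θ)A(θ) + εIₙ ⪯ 0 for all θ ∈ 𝒫, all μ ∈ 𝒟ᵛ and all τ ∈ [0,T̄], and (ii) S(0,θ) − S(T̄,η) ⪯ 0 for all θ,η ∈ 𝒫. Then for every parameter trajectory ρ with constant dwell-time T̄ and every solution x of the LPV system ẋ(t) = A(ρ(t))x(t), one has x(t) → 0 as t → ∞. -/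
/-!
On the `k`-th dwell interval `(kT̄, (k+1)T̄]` let `V(t) = x(t)ᵀ S(t - kT̄, ρ(t)) x(t)`. Its
derivative is affine in `ρ̇ ∈ 𝒟`, so condition (i) at the vertices of `𝒟` gives
`V̇ ≤ -ε|x|² ≤ -cV` with `c = ε / b`, where `a|v|² ≤ vᵀS v ≤ b|v|²` on the compact set
`[0,T̄] × 𝒫`; hence `e^{ct} V(t)` decreases on each interval. At a jump time the clock is
reset, and condition (ii), `S(0, θ) ⪯ S(T̄, η)`, shows that `e^{ct} V` does not increase across
the jump either. Therefore `a |x(t)|² e^{ct}` stays below its initial value, and `x(t) → 0`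
exponentially fast.
-/

attribute [local instance] Matrix.normedAddCommGroup Matrix.normedSpace

open Matrix Filter Set Topology Function

section
variable {ι : Type*} [Fintype ι]

theorem sq_norm_le_dotProduct_self (v : ι → ℝ) : ‖v‖ ^ 2 ≤ v ⬝ᵥ v := by
  have hsum : 0 ≤ v ⬝ᵥ v := Finset.sum_nonneg fun i _ => mul_self_nonneg (v i)
  have hle : ‖v‖ ≤ √(v ⬝ᵥ v) := (pi_norm_le_iff_of_nonneg (Real.sqrt_nonneg _)).2 fun i => by
    rw [Real.norm_eq_abs]
    exact Real.abs_le_sqrt (by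
      simpa [dotProduct, sq] using
        Finset.single_le_sum (fun j _ => mul_self_nonneg (v j)) (Finset.mem_univ i))
  calc ‖v‖ ^ 2 ≤ √(v ⬝ᵥ v) ^ 2 := pow_le_pow_left₀ (norm_nonneg v) hle 2
    _ = v ⬝ᵥ v := Real.sq_sqrt hsum

theorem smul_dotProduct_mulVec_smul (M : Matrix ι ι ℝ) (c : ℝ) (v : ι → ℝ) :
    (c • v) ⬝ᵥ (M *ᵥ (c • v)) = c ^ 2 * (v ⬝ᵥ (M *ᵥ v)) := by
  simp only [mulVec_smul, smul_dotProduct, dotProduct_smul, smul_eq_mul]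
  ring

theorem exists_quadForm_bounds_of_posDef {X : Type*} [TopologicalSpace X] {K : Set X}
    (hK : IsCompact K) {M : X → Matrix ι ι ℝ} (hM : ContinuousOn M K)
    (hpd : ∀ p ∈ K, (M p).PosDef) :
    ∃ a b : ℝ, 0 < a ∧ 0 < b ∧ ∀ p ∈ K, ∀ v : ι → ℝ,
      a * ‖v‖ ^ 2 ≤ v ⬝ᵥ (M p *ᵥ v) ∧ v ⬝ᵥ (M p *ᵥ v) ≤ b * ‖v‖ ^ 2 := by
  set F : X × (ι → ℝ) → ℝ := fun q => q.2 ⬝ᵥ (M q.1 *ᵥ q.2)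
  have hF : ContinuousOn F (K ×ˢ Metric.sphere 0 1) :=
    (by fun_prop : Continuous fun w : (ι → ℝ) × Matrix ι ι ℝ => w.1 ⬝ᵥ (w.2 *ᵥ w.1))
      |>.comp_continuousOn (continuousOn_snd.prodMk (hM.comp continuousOn_fst fun q hq => hq.1))
  suffices h : ∃ a b : ℝ, 0 < a ∧ 0 < b ∧ ∀ q ∈ K ×ˢ Metric.sphere 0 1, a ≤ F q ∧ F q ≤ b by
    obtain ⟨a, b, ha, hb, hab⟩ := h
    refine ⟨a, b, ha, hb, fun p hp v => ?_⟩
    rcases eq_or_ne v 0 with rfl | hv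
    · simp
    have hu : ‖v‖⁻¹ • v ∈ Metric.sphere (0 : ι → ℝ) 1 := by
      simp [norm_smul, hv]
    have hscale : v ⬝ᵥ (M p *ᵥ v) = ‖v‖ ^ 2 * F (p, ‖v‖⁻¹ • v) := by
      simp only [F, smul_dotProduct_mulVec_smul]
      field_simp
    obtain ⟨hlo, hhi⟩ := hab (p, _) ⟨hp, hu⟩
    rw [hscale, mul_comm a, mul_comm b]
    exact ⟨mul_le_mul_of_nonneg_left hlo (sq_nonneg _), mul_le_mul_of_nonneg_left hhi (sq_nonneg _)⟩
  rcases (K ×ˢ Metric.sphere (0 : ι → ℝ) 1).eq_empty_or_nonempty with hC | hC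
  · exact ⟨1, 1, one_pos, one_pos, by simp [hC]⟩
  have hCc := hK.prod (isCompact_sphere (0 : ι → ℝ) 1)
  obtain ⟨qmin, hqmin, hmin⟩ := hCc.exists_isMinOn hC hF
  obtain ⟨qmax, hqmax, hmax⟩ := hCc.exists_isMaxOn hC hF
  have hpos : 0 < F qmin := by
    simpa using (hpd _ hqmin.1).dotProduct_mulVec_pos (ne_zero_of_mem_unit_sphere ⟨_, hqmin.2⟩)
  exact ⟨F qmin, F qmax, hpos, hpos.trans_le (hmin hqmax), fun q hq => ⟨hmin hq, hmax hq⟩⟩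

theorem HasDerivAt.dotProduct {x z : ℝ → ι → ℝ} {x' z' : ι → ℝ} {t : ℝ}
    (hx : HasDerivAt x x' t) (hz : HasDerivAt z z' t) :
    HasDerivAt (fun s => x s ⬝ᵥ z s) (x' ⬝ᵥ z t + x t ⬝ᵥ z') t :=
  (HasDerivAt.fun_sum (u := Finset.univ) fun i _ =>
    (hasDerivAt_pi.1 hx i).mul (hasDerivAt_pi.1 hz i)).congr_deriv Finset.sum_add_distrib

theorem HasDerivAt.mulVec {M : ℝ → Matrix ι ι ℝ} {M' : Matrix ι ι ℝ} {y : ℝ → ι → ℝ} {y' : ι → ℝ}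
    {t : ℝ} (hM : HasDerivAt M M' t) (hy : HasDerivAt y y' t) :
    HasDerivAt (fun s => M s *ᵥ y s) (M' *ᵥ y t + M t *ᵥ y') t :=
  hasDerivAt_pi.2 fun i => (hasDerivAt_pi.1 hM i).dotProduct hy

end

def boxVertices {κ : Type*} (lo hi : κ → ℝ) : Set (κ → ℝ) := {μ | ∀ i, μ i = lo i ∨ μ i = hi i}

theorem LinearMap.exists_mem_boxVertices_apply_ge {κ : Type*} [Fintype κ]
    (L : (κ → ℝ) →ₗ[ℝ] ℝ) {lo hi μ : κ → ℝ} (hμ : μ ∈ Icc lo hi) :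
    ∃ μ' ∈ boxVertices lo hi, L μ ≤ L μ' := by
  classical
  set e : κ → κ → ℝ := fun i j => if i = j then 1 else 0
  set μ' : κ → ℝ := fun i => if 0 ≤ L (e i) then hi i else lo i
  refine ⟨μ', fun i => ?_, ?_⟩
  · by_cases h : 0 ≤ L (e i) <;> simp [μ', h]
  rw [L.pi_apply_eq_sum_univ μ, L.pi_apply_eq_sum_univ μ']
  refine Finset.sum_le_sum fun i _ => ?_
  by_cases h : 0 ≤ L (e i)
  · simpa [μ', h] using mul_le_mul_of_nonneg_right (hμ.2 i) h
  · simpa [μ', h] using mul_le_mul_of_nonpos_right (hμ.1 i) (not_le.1 h).le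

theorem quadForm_deriv_le_of_boxVertices {ι κ : Type*} [Fintype ι] [DecidableEq ι] [Fintype κ]
    (D : ℝ × (κ → ℝ) →L[ℝ] Matrix ι ι ℝ) (S A : Matrix ι ι ℝ) {ε : ℝ} {lo hi ν : κ → ℝ}
    (hν : ν ∈ Icc lo hi)
    (hflow : ∀ μ ∈ boxVertices lo hi,
      (-(D (1, 0) + D (0, μ) + Aᵀ * S + S * A + ε • (1 : Matrix ι ι ℝ))).PosSemidef)
    (v : ι → ℝ) :
    (A *ᵥ v) ⬝ᵥ (S *ᵥ v) + v ⬝ᵥ (D (1, ν) *ᵥ v) + v ⬝ᵥ (S *ᵥ (A *ᵥ v)) ≤ -(ε * (v ⬝ᵥ v)) := by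
  let L : (κ → ℝ) →ₗ[ℝ] ℝ := LinearMap.applyₗ v ∘ₗ LinearMap.applyₗ v ∘ₗ
    (Matrix.toLinearMap₂' ℝ).toLinearMap ∘ₗ (D ∘L ContinuousLinearMap.inr ℝ ℝ (κ → ℝ)).toLinearMap
  have hL : ∀ μ, L μ = v ⬝ᵥ (D (0, μ) *ᵥ v) := fun μ => by simp [L, toLinearMap₂'_apply']
  obtain ⟨μ, hμ, hLμ⟩ := L.exists_mem_boxVertices_apply_ge hν
  have hpsd := (hflow μ hμ).dotProduct_mulVec_nonneg v
  have hsplit : D (1, ν) = D (1, 0) + D (0, ν) := by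
    rw [← map_add, Prod.mk_add_mk, add_zero, zero_add]
  have htrans : (A *ᵥ v) ⬝ᵥ (S *ᵥ v) = v ⬝ᵥ ((Aᵀ * S) *ᵥ v) := by
    rw [← mulVec_mulVec, dotProduct_mulVec v Aᵀ, vecMul_transpose]
  rw [hL, hL] at hLμ
  simp only [star_trivial, neg_mulVec, add_mulVec, smul_mulVec, one_mulVec, dotProduct_neg,
    dotProduct_add, dotProduct_smul, smul_eq_mul] at hpsd
  rw [htrans, hsplit, add_mulVec, dotProduct_add, mulVec_mulVec]
  linarith

theorem antitoneOn_exp_mul_of_hasDerivAt {D : Set ℝ} (hD : Convex ℝ D) {f : ℝ → ℝ} {c : ℝ}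
    (hf : ContinuousOn f D) (hderiv : ∀ t ∈ interior D, ∃ d, HasDerivAt f d t ∧ d ≤ -(c * f t)) :
    AntitoneOn (fun t => Real.exp (c * t) * f t) D := by
  have hexp : ∀ t, HasDerivAt (fun t => Real.exp (c * t)) (Real.exp (c * t) * c) t := fun t => by
    simpa using ((hasDerivAt_id t).const_mul c).exp
  refine antitoneOn_of_deriv_nonpos hD
    ((Real.continuous_exp.comp (continuous_const_mul c)).continuousOn.mul hf)
    (fun t ht => ?_) fun t ht => ?_ <;> obtain ⟨d, hd, hle⟩ := hderiv t ht
  · exact ((hexp t).fun_mul hd).differentiableAt.differentiableWithinAt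
  rw [((hexp t).fun_mul hd).deriv]
  have hpos := Real.exp_pos (c * t)
  nlinarith

theorem AntitoneOn.le_of_tendsto_nhdsGT {g h : ℝ → ℝ} {a b L : ℝ} (hg : AntitoneOn g (Ioc a b))
    (hgh : ∀ᶠ s in 𝓝[>] a, g s ≤ h s) (hh : Tendsto h (𝓝[>] a) (𝓝 L)) :
    ∀ t ∈ Ioc a b, g t ≤ L := fun t ht =>
  ge_of_tendsto hh <| by
    filter_upwards [hgh, Ioo_mem_nhdsGT ht.1] with s hs hs'
    exact (hg ⟨hs'.1, hs'.2.le.trans ht.2⟩ ht hs'.2.le).trans hs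

theorem tendsto_sub_of_tendsto_of_eventually_mem_compact {α β ι E : Type*} [TopologicalSpace α]
    [TopologicalSpace β] [SeminormedAddCommGroup E] {G : α → β → E}
    (hG : Continuous (uncurry G)) {K : Set β} (hK : IsCompact K) {l : Filter ι}
    {f : ι → α} {a : α} (hf : Tendsto f l (𝓝 a)) {g : ι → β} (hg : ∀ᶠ i in l, g i ∈ K) :
    Tendsto (fun i => G (f i) (g i) - G a (g i)) l (𝓝 0) := by
  rw [Metric.tendsto_nhds]
  intro δ hδ
  obtain ⟨v, hv, hvG⟩ := hK.mem_uniformity_of_prod hG.continuousOn (mem_univ a)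
    (Metric.dist_mem_uniformity hδ)
  rw [nhdsWithin_univ] at hv
  filter_upwards [hf hv, hg] with i hfi hgi
  simpa [dist_eq_norm] using hvG _ hfi _ hgi

theorem exists_nat_mem_Ioc_mul {T t : ℝ} (hT : 0 < T) (ht : 0 < t) :
    ∃ k : ℕ, t ∈ Ioc ((k : ℝ) * T) (((k : ℝ) + 1) * T) := by
  have hceil : 1 ≤ ⌈t / T⌉₊ := Nat.one_le_iff_ne_zero.2 (by positivity)
  refine ⟨⌈t / T⌉₊ - 1, ?_, ?_⟩
  · rw [Nat.cast_sub hceil, Nat.cast_one, ← lt_div_iff₀ hT]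
    linarith [Nat.ceil_lt_add_one (div_pos ht hT).le]
  · rw [Nat.cast_sub hceil, Nat.cast_one, sub_add_cancel, ← div_le_iff₀ hT]
    exact Nat.le_ceil _

theorem ne_nat_mul_of_mem_Ioo {T t : ℝ} (hT : 0 ≤ T) {k : ℕ}
    (ht : t ∈ Ioo ((k : ℝ) * T) (((k : ℝ) + 1) * T)) (m : ℕ) : t ≠ m * T := by
  rintro rfl
  have hkm : k < m := by exact_mod_cast lt_of_mul_lt_mul_right ht.1 hT
  have hmk : m < k + 1 := by exact_mod_cast lt_of_mul_lt_mul_right ht.2 hT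
  omega

theorem continuousOn_Ioc_of_continuousAt {α : Type*} [TopologicalSpace α] {f : ℝ → α} {a b : ℝ}
    (hf : ∀ t ∈ Ioo a b, ContinuousAt f t) (hb : ContinuousWithinAt f (Iio b) b) :
    ContinuousOn f (Ioc a b) := by
  intro t ht
  rcases ht.2.eq_or_lt with rfl | htb
  · exact (continuousWithinAt_Iio_iff_Iic.1 hb).mono Ioc_subset_Iic_self
  · exact (hf t ⟨ht.1, htb⟩).continuousWithinAt

theorem tendsto_zero_of_sq_norm_mul_exp_le {E : Type*} [SeminormedAddCommGroup E] {x : ℝ → E}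
    {a c C : ℝ} (ha : 0 < a) (hc : 0 < c) (hx : ∀ t > 0, a * ‖x t‖ ^ 2 * Real.exp (c * t) ≤ C) :
    Tendsto x atTop (𝓝 0) := by
  have hdecay : Tendsto (fun t => C / a * Real.exp (-(c * t))) atTop (𝓝 0) := by
    simpa using (Real.tendsto_exp_atBot.comp
      (tendsto_neg_atTop_atBot.comp (tendsto_id.const_mul_atTop hc))).const_mul (C / a)
  have hsq : Tendsto (fun t => ‖x t‖ ^ 2) atTop (𝓝 0) := by
    refine squeeze_zero' (.of_forall fun t => sq_nonneg _) ?_ hdecay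
    filter_upwards [eventually_gt_atTop 0] with t ht
    rw [Real.exp_neg, ← div_eq_mul_inv, le_div_iff₀ (Real.exp_pos _), le_div_iff₀' ha]
    exact (mul_assoc _ _ _).symm.le.trans (hx t ht)
  rw [tendsto_zero_iff_norm_tendsto_zero]
  simpa using hsq.sqrt

section
variable {ι κ : Type*} [Fintype ι]
  {A : (κ → ℝ) → Matrix ι ι ℝ} {S : ℝ → (κ → ℝ) → Matrix ι ι ℝ} {P : Set (κ → ℝ)}
  {ρ ρ' : ℝ → κ → ℝ} {x : ℝ → ι → ℝ} {lo hi : κ → ℝ} {T ε c t₀ t₁ : ℝ}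

theorem antitoneOn_exp_mul_quadForm [DecidableEq ι] [Fintype κ] (hS : ContDiff ℝ 1 (uncurry S))
    (hflow : ∀ τ ∈ Icc 0 T, ∀ θ ∈ P, ∀ μ ∈ boxVertices lo hi,
      (-(fderiv ℝ (uncurry S) (τ, θ) (1, 0) + fderiv ℝ (uncurry S) (τ, θ) (0, μ)
        + (A θ)ᵀ * S τ θ + S τ θ * A θ + ε • (1 : Matrix ι ι ℝ))).PosSemidef)
    (hrate : ∀ τ ∈ Icc 0 T, ∀ θ ∈ P, ∀ v, c * (v ⬝ᵥ (S τ θ *ᵥ v)) ≤ ε * (v ⬝ᵥ v))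
    (hdwell : t₁ ≤ t₀ + T) (hρP : ∀ t ∈ Ioo t₀ t₁, ρ t ∈ P) (hρ : ContinuousOn ρ (Ioc t₀ t₁))
    (hρdiff : ∀ t ∈ Ioo t₀ t₁, HasDerivAt ρ (ρ' t) t ∧ ρ' t ∈ Icc lo hi)
    (hx : ContinuousOn x (Ioc t₀ t₁)) (hxdiff : ∀ t ∈ Ioo t₀ t₁, HasDerivAt x (A (ρ t) *ᵥ x t) t) :
    AntitoneOn (fun t => Real.exp (c * t) * (x t ⬝ᵥ (S (t - t₀) (ρ t) *ᵥ x t))) (Ioc t₀ t₁) := by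
  have hM : ∀ t ∈ Ioo t₀ t₁, HasDerivAt (fun s => S (s - t₀) (ρ s))
      (fderiv ℝ (uncurry S) (t - t₀, ρ t) (1, ρ' t)) t := fun t ht =>
    (hS.differentiable one_ne_zero _).hasFDerivAt.comp_hasDerivAt t
      (((hasDerivAt_id t).sub_const t₀).prodMk (hρdiff t ht).1)
  have hcont : ContinuousOn (fun t => S (t - t₀) (ρ t)) (Ioc t₀ t₁) :=
    hS.continuous.comp_continuousOn ((continuousOn_id.sub continuousOn_const).prodMk hρ)
  refine antitoneOn_exp_mul_of_hasDerivAt (convex_Ioc t₀ t₁)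
    ((by fun_prop : Continuous fun w : (ι → ℝ) × Matrix ι ι ℝ => w.1 ⬝ᵥ (w.2 *ᵥ w.1))
      |>.comp_continuousOn (hx.prodMk hcont)) fun t ht => ?_
  rw [interior_Ioc] at ht
  have hclock : t - t₀ ∈ Icc 0 T := ⟨by linarith [ht.1], by linarith [ht.2]⟩
  have hflow' := quadForm_deriv_le_of_boxVertices _ _ _ (hρdiff t ht).2
    (hflow _ hclock _ (hρP t ht)) (x t)
  have hrate' := hrate _ hclock _ (hρP t ht) (x t)
  refine ⟨_, (hxdiff t ht).dotProduct ((hM t ht).mulVec (hxdiff t ht)), ?_⟩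
  rw [dotProduct_add]
  linarith

/-- `ρ` need not have a right limit at the jump time `t₀`; compactness of `P` makes the
quadratic form uniformly continuous in the parameter instead. -/
theorem tendsto_quadForm_clock_sub (hS : Continuous (uncurry S)) (hP : IsCompact P)
    (hρP : ∀ᶠ s in 𝓝[>] t₀, ρ s ∈ P) (hx : Tendsto x (𝓝[>] t₀) (𝓝 (x t₀))) :
    Tendsto (fun s => x s ⬝ᵥ (S (s - t₀) (ρ s) *ᵥ x s) - x t₀ ⬝ᵥ (S 0 (ρ s) *ᵥ x t₀))
      (𝓝[>] t₀) (𝓝 0) := by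
  have hS' : Continuous fun p : ((ι → ℝ) × ℝ) × (κ → ℝ) => S p.1.2 p.2 :=
    hS.comp (by fun_prop : Continuous fun p : ((ι → ℝ) × ℝ) × (κ → ℝ) => (p.1.2, p.2))
  have hclock : Tendsto (fun s => s - t₀) (𝓝[>] t₀) (𝓝 0) :=
    ((continuous_sub_right t₀).tendsto' t₀ 0 (sub_self t₀)).mono_left nhdsWithin_le_nhds
  exact tendsto_sub_of_tendsto_of_eventually_mem_compact
    (G := fun (w : (ι → ℝ) × ℝ) θ => w.1 ⬝ᵥ (S w.2 θ *ᵥ w.1)) (by fun_prop) hP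
    (hx.prodMk_nhds hclock) hρP

theorem exp_mul_quadForm_le_of_dwell [DecidableEq ι] [Fintype κ] (hS : ContDiff ℝ 1 (uncurry S))
    (hP : IsCompact P)
    (hflow : ∀ τ ∈ Icc 0 T, ∀ θ ∈ P, ∀ μ ∈ boxVertices lo hi,
      (-(fderiv ℝ (uncurry S) (τ, θ) (1, 0) + fderiv ℝ (uncurry S) (τ, θ) (0, μ)
        + (A θ)ᵀ * S τ θ + S τ θ * A θ + ε • (1 : Matrix ι ι ℝ))).PosSemidef)
    (hrate : ∀ τ ∈ Icc 0 T, ∀ θ ∈ P, ∀ v, c * (v ⬝ᵥ (S τ θ *ᵥ v)) ≤ ε * (v ⬝ᵥ v))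
    (hjump : ∀ θ ∈ P, ∀ η ∈ P, (S T η - S 0 θ).PosSemidef)
    (hdwell : t₁ ≤ t₀ + T) (hρP : ∀ t ∈ Icc t₀ t₁, ρ t ∈ P)
    (hρleft : ContinuousWithinAt ρ (Iio t₁) t₁)
    (hρdiff : ∀ t ∈ Ioo t₀ t₁, HasDerivAt ρ (ρ' t) t ∧ ρ' t ∈ Icc lo hi)
    (hx : ContinuousOn x (Icc t₀ t₁)) (hxdiff : ∀ t ∈ Ioo t₀ t₁, HasDerivAt x (A (ρ t) *ᵥ x t) t) :
    ∀ t ∈ Ioc t₀ t₁, Real.exp (c * t) * (x t ⬝ᵥ (S (t - t₀) (ρ t) *ᵥ x t))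
      ≤ Real.exp (c * t₀) * (x t₀ ⬝ᵥ (S T (ρ t₀) *ᵥ x t₀)) := by
  intro t ht
  have hIoo : Ioo t₀ t₁ ∈ 𝓝[>] t₀ := Ioo_mem_nhdsGT (ht.1.trans_le ht.2)
  have hmono := antitoneOn_exp_mul_quadForm hS hflow hrate hdwell
    (fun s hs => hρP s (Ioo_subset_Icc_self hs))
    (continuousOn_Ioc_of_continuousAt (fun s hs => (hρdiff s hs).1.continuousAt) hρleft) hρdiff
    (hx.mono Ioc_subset_Icc_self) hxdiff
  have hlim := tendsto_quadForm_clock_sub hS.continuous hP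
    (eventually_of_mem hIoo fun s hs => hρP s (Ioo_subset_Icc_self hs))
    ((hx t₀ (left_mem_Icc.2 (ht.1.le.trans ht.2))).tendsto.mono_left
      (nhdsWithin_le_of_mem (mem_of_superset hIoo Ioo_subset_Icc_self)))
  refine hmono.le_of_tendsto_nhdsGT (h := fun s => Real.exp (c * s) *
      (x s ⬝ᵥ (S (s - t₀) (ρ s) *ᵥ x s) - x t₀ ⬝ᵥ (S 0 (ρ s) *ᵥ x t₀)
        + x t₀ ⬝ᵥ (S T (ρ t₀) *ᵥ x t₀))) ?_ ?_ t ht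
  · filter_upwards [hIoo] with s hs
    have hpsd := (hjump (ρ s) (hρP s (Ioo_subset_Icc_self hs)) (ρ t₀)
      (hρP t₀ (left_mem_Icc.2 (ht.1.le.trans ht.2)))).dotProduct_mulVec_nonneg (x t₀)
    rw [star_trivial, sub_mulVec, dotProduct_sub] at hpsd
    gcongr
    linarith
  · simpa using ((Real.continuous_exp.comp (continuous_const_mul c)).tendsto t₀).mono_left
      nhdsWithin_le_nhds |>.mul (hlim.add_const (x t₀ ⬝ᵥ (S T (ρ t₀) *ᵥ x t₀)))

end

theorem exp_mul_le_of_forall_mem_Ioc {V : ℕ → ℝ → ℝ} {m : ℕ → ℝ} {c T : ℝ} (hT : 0 < T)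
    (hdecay : ∀ k : ℕ, ∀ t ∈ Ioc ((k : ℝ) * T) (((k : ℝ) + 1) * T),
      Real.exp (c * t) * V k t ≤ Real.exp (c * (k * T)) * m k)
    (hsample : ∀ k : ℕ, V k (((k : ℝ) + 1) * T) = m (k + 1)) :
    ∀ k : ℕ, ∀ t ∈ Ioc ((k : ℝ) * T) (((k : ℝ) + 1) * T), Real.exp (c * t) * V k t ≤ m 0 := by
  have hend : ∀ k : ℕ, ((k : ℝ) + 1) * T ∈ Ioc ((k : ℝ) * T) (((k : ℝ) + 1) * T) :=
    fun k => ⟨by linarith, le_rfl⟩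
  have hsamples : ∀ k : ℕ, Real.exp (c * (k * T)) * m k ≤ m 0 := by
    intro k
    induction k with
    | zero => simp
    | succ k ih =>
      calc Real.exp (c * ((k + 1 : ℕ) * T)) * m (k + 1)
          = Real.exp (c * (((k : ℝ) + 1) * T)) * V k (((k : ℝ) + 1) * T) := by
            rw [hsample, Nat.cast_succ]
        _ ≤ Real.exp (c * (k * T)) * m k := hdecay k _ (hend k)
        _ ≤ m 0 := ih
  exact fun k t ht => (hdecay k t ht).trans (hsamples k)

theorem constant_dwell_time_stability_general
    {n N : ℕ}
    -- the parameter box 𝒫 = [ρlo, ρhi] and the derivative box 𝒟 = [νlo, νhi]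
    (ρlo ρhi νlo νhi : Fin N → ℝ)
    -- the system matrix, continuous (hence bounded) on the compact box 𝒫
    (A : (Fin N → ℝ) → Matrix (Fin n) (Fin n) ℝ)
    -- the dwell-time
    (T : ℝ) (hT : 0 < T)
    -- the Lyapunov certificate
    (ε : ℝ) (hε : 0 < ε)
    (S : ℝ → (Fin N → ℝ) → Matrix (Fin n) (Fin n) ℝ)
    (hS_c1 : ContDiff ℝ 1 (fun p : ℝ × (Fin N → ℝ) => S p.1 p.2))
    (hS_pd : ∀ τ ∈ Icc (0 : ℝ) T, ∀ θ ∈ Icc ρlo ρhi, (S τ θ).PosDef)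
    -- condition (i): ∂_τ S + ∂_ρ S μ + AᵀS + SA + εI ⪯ 0 on [0,T̄] × 𝒫 × 𝒟ᵛ
    (hflow : ∀ τ ∈ Icc (0 : ℝ) T, ∀ θ ∈ Icc ρlo ρhi,
      ∀ μ : Fin N → ℝ, (∀ i, μ i = νlo i ∨ μ i = νhi i) →
      (-(fderiv ℝ (fun p : ℝ × (Fin N → ℝ) => S p.1 p.2) (τ, θ) (1, 0)
          + fderiv ℝ (fun p : ℝ × (Fin N → ℝ) => S p.1 p.2) (τ, θ) (0, μ)
          + (A θ)ᵀ * S τ θ + S τ θ * A θ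
          + ε • (1 : Matrix (Fin n) (Fin n) ℝ))).PosSemidef)
    -- condition (ii): S(0,θ) − S(T̄,η) ⪯ 0 on 𝒫 × 𝒫
    (hjump : ∀ θ ∈ Icc ρlo ρhi, ∀ η ∈ Icc ρlo ρhi, (S T η - S 0 θ).PosSemidef)
    -- a parameter trajectory with constant dwell-time T̄ (jump times t_k = k T̄)
    (ρ ρ' : ℝ → Fin N → ℝ)
    (hρP : ∀ t ≥ (0 : ℝ), ρ t ∈ Icc ρlo ρhi)
    (hρleft : ∀ t > (0 : ℝ), Tendsto ρ (nhdsWithin t (Iio t)) (nhds (ρ t)))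
    (hρdiff : ∀ k : ℕ, ∀ t ∈ Ioo ((k : ℝ) * T) (((k : ℝ) + 1) * T),
      HasDerivAt ρ (ρ' t) t ∧ ρ' t ∈ Icc νlo νhi)
    -- a solution of the LPV system
    (x : ℝ → Fin n → ℝ)
    (hxcont : ContinuousOn x (Ici 0))
    (hxdiff : ∀ t ≥ (0 : ℝ), (∀ k : ℕ, 1 ≤ k → t ≠ (k : ℝ) * T) →
      HasDerivWithinAt x ((A (ρ t)).mulVec (x t)) (Ici 0) t) :
    Tendsto x atTop (nhds 0) := by
  obtain ⟨a, b, ha, hb, hab⟩ := exists_quadForm_bounds_of_posDef (isCompact_Icc.prod isCompact_Icc)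
    hS_c1.continuous.continuousOn fun p hp => hS_pd p.1 hp.1 p.2 hp.2
  have hkT : ∀ k : ℕ, 0 ≤ (k : ℝ) * T := fun k => by positivity
  have hrate : ∀ τ ∈ Icc 0 T, ∀ θ ∈ Icc ρlo ρhi, ∀ v,
      ε / b * (v ⬝ᵥ (S τ θ *ᵥ v)) ≤ ε * (v ⬝ᵥ v) := fun τ hτ θ hθ v => by
    rw [div_mul_eq_mul_div, div_le_iff₀ hb]
    nlinarith [mul_le_mul_of_nonneg_left (hab (τ, θ) ⟨hτ, hθ⟩ v).2 hε.le,
      mul_le_mul_of_nonneg_left (sq_norm_le_dotProduct_self v) (mul_pos hε hb).le]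
  have hdecay (k : ℕ) := exp_mul_quadForm_le_of_dwell (t₀ := k * T) (t₁ := (k + 1) * T) hS_c1
    isCompact_Icc hflow hrate hjump (by linarith) (fun t ht => hρP t ((hkT k).trans ht.1))
    (hρleft _ (by positivity)) (hρdiff k) (hxcont.mono fun t ht => (hkT k).trans ht.1)
    fun t ht => (hxdiff t ((hkT k).trans ht.1.le) fun m _ => ne_nat_mul_of_mem_Ioo hT.le ht m)
      |>.hasDerivAt (Ici_mem_nhds ((hkT k).trans_lt ht.1))
  have hbound := exp_mul_le_of_forall_mem_Ioc (V := fun k t => x t ⬝ᵥ (S (t - k * T) (ρ t) *ᵥ x t))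
    hT hdecay (fun k => by simp only [add_mul, one_mul, Nat.cast_succ, add_sub_cancel_left])
  refine tendsto_zero_of_sq_norm_mul_exp_le (C := x 0 ⬝ᵥ (S T (ρ 0) *ᵥ x 0)) ha (div_pos hε hb)
    fun t ht => ?_
  obtain ⟨k, hk⟩ := exists_nat_mem_Ioc_mul hT ht
  have hclock : t - k * T ∈ Icc 0 T := ⟨by linarith [hk.1], by linarith [hk.2]⟩
  have hlow := (hab (t - k * T, ρ t) ⟨hclock, hρP t ht.le⟩ (x t)).1
  calc a * ‖x t‖ ^ 2 * Real.exp (ε / b * t)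
      ≤ Real.exp (ε / b * t) * (x t ⬝ᵥ (S (t - k * T) (ρ t) *ᵥ x t)) := by
        rw [mul_comm]; gcongr
    _ ≤ _ := by simpa using hbound k t hk

theorem constant_dwell_time_stability
    {n N : ℕ}
    -- the parameter box 𝒫 = [ρlo, ρhi] and the derivative box 𝒟 = [νlo, νhi]
    (ρlo ρhi νlo νhi : Fin N → ℝ)
    (hbox : ρlo ≤ ρhi) (hνbox : νlo ≤ νhi)
    -- the system matrix, continuous (hence bounded) on the compact box 𝒫
    (A : (Fin N → ℝ) → Matrix (Fin n) (Fin n) ℝ)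
    (hA : ContinuousOn A (Icc ρlo ρhi))
    -- the dwell-time
    (T : ℝ) (hT : 0 < T)
    -- the Lyapunov certificate
    (ε : ℝ) (hε : 0 < ε)
    (S : ℝ → (Fin N → ℝ) → Matrix (Fin n) (Fin n) ℝ)
    (hS_c1 : ContDiff ℝ 1 (fun p : ℝ × (Fin N → ℝ) => S p.1 p.2))
    (hS_symm : ∀ τ θ, (S τ θ).IsSymm)
    (hS_pd : ∀ τ ∈ Icc (0 : ℝ) T, ∀ θ ∈ Icc ρlo ρhi, (S τ θ).PosDef)
    -- condition (i): ∂_τ S + ∂_ρ S μ + AᵀS + SA + εI ⪯ 0 on [0,T̄] × 𝒫 × 𝒟ᵛ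
    (hflow : ∀ τ ∈ Icc (0 : ℝ) T, ∀ θ ∈ Icc ρlo ρhi,
      ∀ μ : Fin N → ℝ, (∀ i, μ i = νlo i ∨ μ i = νhi i) →
      (-(fderiv ℝ (fun p : ℝ × (Fin N → ℝ) => S p.1 p.2) (τ, θ) (1, 0)
          + fderiv ℝ (fun p : ℝ × (Fin N → ℝ) => S p.1 p.2) (τ, θ) (0, μ)
          + (A θ)ᵀ * S τ θ + S τ θ * A θ
          + ε • (1 : Matrix (Fin n) (Fin n) ℝ))).PosSemidef)
    -- condition (ii): S(0,θ) − S(T̄,η) ⪯ 0 on 𝒫 × 𝒫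
    (hjump : ∀ θ ∈ Icc ρlo ρhi, ∀ η ∈ Icc ρlo ρhi, (S T η - S 0 θ).PosSemidef)
    -- a parameter trajectory with constant dwell-time T̄ (jump times t_k = k T̄)
    (ρ ρ' : ℝ → Fin N → ℝ)
    (hρP : ∀ t ≥ (0 : ℝ), ρ t ∈ Icc ρlo ρhi)
    (hρleft : ∀ t > (0 : ℝ), Tendsto ρ (nhdsWithin t (Iio t)) (nhds (ρ t)))
    (hρdiff : ∀ k : ℕ, ∀ t ∈ Ioo ((k : ℝ) * T) (((k : ℝ) + 1) * T),
      HasDerivAt ρ (ρ' t) t ∧ ρ' t ∈ Icc νlo νhi)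
    -- a solution of the LPV system
    (x : ℝ → Fin n → ℝ)
    (hxcont : ContinuousOn x (Ici 0))
    (hxdiff : ∀ t ≥ (0 : ℝ), (∀ k : ℕ, 1 ≤ k → t ≠ (k : ℝ) * T) →
      HasDerivWithinAt x ((A (ρ t)).mulVec (x t)) (Ici 0) t) :
    Tendsto x atTop (nhds 0) :=
  constant_dwell_time_stability_general ρlo ρhi νlo νhi A T hT ε hε S hS_c1 hS_pd hflow hjump ρ ρ'
    hρP hρleft hρdiff x hxcont hxdiff
end

section
/- If a continuous matrix-valued function S : [0,δ] × 𝒫 → Sⁿ (δ > 0, 𝒫 ⊂ ℝᴺ nonempty) satisfies S(0,θ) − S(ε,η) ⪯ 0 for all θ, η ∈ 𝒫 and all ε ∈ (0,δ], then S(0,·) is constant on 𝒫, i.e., S(0,θ) = S(0,η) for all θ, η ∈ 𝒫. -/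
/-!
Letting `ε → 0⁺` in `S(0,θ) ⪯ S(ε,η)` gives `S(0,θ) ⪯ S(0,η)`, because the positive
semidefinite cone is closed; exchanging `θ` and `η` and using antisymmetry of the Loewner
order gives equality.
-/

open Set Filter Topology
open scoped ComplexOrder MatrixOrder

namespace Matrix

variable {n 𝕜 : Type*} [Fintype n] [RCLike 𝕜]

theorem isClosed_setOf_posSemidef : IsClosed {A : Matrix n n 𝕜 | A.PosSemidef} := by
  simp only [posSemidef_iff_dotProduct_mulVec, ofPred_and, ofPred_forall]
  refine (isClosed_eq continuous_id.matrix_conjTranspose continuous_id).inter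
    (isClosed_iInter fun x => isClosed_le continuous_const ?_)
  fun_prop

theorem instOrderClosedTopology : OrderClosedTopology (Matrix n n 𝕜) where
  isClosed_le' := isClosed_le_of_isClosed_nonneg <| by
    simpa only [nonneg_iff_posSemidef] using isClosed_setOf_posSemidef

end Matrix

attribute [local instance] Matrix.normedAddCommGroup Matrix.normedSpace

theorem S_zero_constant_of_jump_condition_general
    {n N : ℕ} (δ : ℝ) (hδ : 0 < δ)
    (P : Set (Fin N → ℝ))
    (S : ℝ → (Fin N → ℝ) → Matrix (Fin n) (Fin n) ℝ)
    (hS_cont : ContinuousOn (fun p : ℝ × (Fin N → ℝ) => S p.1 p.2) (Icc 0 δ ×ˢ P))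
    (hjump : ∀ θ ∈ P, ∀ η ∈ P, ∀ ε ∈ Ioc (0 : ℝ) δ, (S ε η - S 0 θ).PosSemidef) :
    ∀ θ ∈ P, ∀ η ∈ P, S 0 θ = S 0 η := by
  have := Matrix.instOrderClosedTopology (n := Fin n) (𝕜 := ℝ)
  have := left_nhdsWithin_Ioc_neBot hδ
  have hle : ∀ θ ∈ P, ∀ η ∈ P, S 0 θ ≤ S 0 η := fun θ hθ η hη => by
    have hlim : Tendsto (fun ε => S ε η) (𝓝[Ioc 0 δ] 0) (𝓝 (S 0 η)) :=
      ((hS_cont.uncurry_right η hη) 0 (left_mem_Icc.2 hδ.le)).tendsto.mono_left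
        (nhdsWithin_mono _ Ioc_subset_Icc_self)
    exact ge_of_tendsto hlim (eventually_nhdsWithin_of_forall (hjump θ hθ η hη))
  exact fun θ hθ η hη => le_antisymm (hle θ hθ η hη) (hle η hη θ hθ)

theorem S_zero_constant_of_jump_condition
    {n N : ℕ} (δ : ℝ) (hδ : 0 < δ)
    (P : Set (Fin N → ℝ)) (hP : P.Nonempty)
    (S : ℝ → (Fin N → ℝ) → Matrix (Fin n) (Fin n) ℝ)
    (hS_cont : ContinuousOn (fun p : ℝ × (Fin N → ℝ) => S p.1 p.2) (Icc 0 δ ×ˢ P))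
    (hS_symm : ∀ τ ∈ Icc (0 : ℝ) δ, ∀ θ ∈ P, (S τ θ).IsSymm)
    (hjump : ∀ θ ∈ P, ∀ η ∈ P, ∀ ε ∈ Ioc (0 : ℝ) δ, (S ε η - S 0 θ).PosSemidef) :
    ∀ θ ∈ P, ∀ η ∈ P, S 0 θ = S 0 η :=
  S_zero_constant_of_jump_condition_general δ hδ P S hS_cont hjump
end

section
/- Robust stability under differentiable parameter variations: Suppose there exist a continuously differentiable matrix-valued function P : 𝒫 → Sⁿ with P(θ) positive definite for every θ ∈ 𝒫 and ε > 0 such that ∂_ρ P(θ)μ + A(θ)ᵀP(θ) + P(θ)A(θ) ⪯ −εIₙ for all θ ∈ 𝒫 and all μ ∈ 𝒟ᵛ. Then for every continuously differentiable ρ : [0,∞) → 𝒫 with ρ̇(t) ∈ 𝒟 for all t ≥ 0, every continuously differentiable x : [0,∞) → ℝⁿ satisfying ẋ(t) = A(ρ(t))x(t) for all t ≥ 0 satisfies x(t) → 0 as t → ∞. -/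
/-!
Take `V(t) = x(t)ᵀ P(ρ(t)) x(t)`. Along a solution `V' = xᵀ (∂_ρP(ρ)ρ̇ + AᵀP + PA) x`, which is
affine in `ρ̇`, so the inequality imposed at the vertices of `𝒟` holds on all of `𝒟`:
`V' ≤ -ε|x|²`. By compactness of `𝒫` there are `0 < c ≤ C` with `c|x|² ≤ V ≤ C|x|²`, hence
`V' ≤ -(ε/C) V`, so `V` and with it `|x|²` decay exponentially.
-/

attribute [local instance] Matrix.normedAddCommGroup Matrix.normedSpace

open Matrix Filter Set

section QuadraticForm

variable {ι : Type*} [Fintype ι]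

lemma mul_self_le_dotProduct_self (v : ι → ℝ) (i : ι) : v i * v i ≤ v ⬝ᵥ v :=
  Finset.single_le_sum (f := fun j => v j * v j) (fun j _ => mul_self_nonneg (v j))
    (Finset.mem_univ i)

lemma isCompact_setOf_dotProduct_self_eq_one : IsCompact {u : ι → ℝ | u ⬝ᵥ u = 1} := by
  refine (isCompact_closedBall (0 : ι → ℝ) 1).of_isClosed_subset
    (isClosed_eq (continuous_id.dotProduct continuous_id) continuous_const) fun u hu => ?_
  refine mem_closedBall_zero_iff.2 <| (pi_norm_le_iff_of_nonneg zero_le_one).2 fun i => ?_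
  rw [Real.norm_eq_abs, abs_le_one_iff_mul_self_le_one]
  exact (mul_self_le_dotProduct_self u i).trans_eq hu

lemma exists_dotProduct_self_eq_one_and_eq_smul {v : ι → ℝ} (hv : v ≠ 0) :
    ∃ (r : ℝ) (u : ι → ℝ), u ⬝ᵥ u = 1 ∧ v = r • u := by
  have hpos : 0 < v ⬝ᵥ v := by simpa using dotProduct_self_star_pos_iff.2 hv
  refine ⟨√(v ⬝ᵥ v), (√(v ⬝ᵥ v))⁻¹ • v, ?_, ?_⟩
  · rw [smul_dotProduct, dotProduct_smul, smul_eq_mul, smul_eq_mul, ← mul_assoc, ← mul_inv,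
      Real.mul_self_sqrt hpos.le, inv_mul_cancel₀ hpos.ne']
  · rw [smul_smul, mul_inv_cancel₀ (Real.sqrt_pos.2 hpos).ne', one_smul]

lemma mul_dotProduct_self_le_of_forall_sphere {M : Matrix ι ι ℝ} {c : ℝ}
    (h : ∀ u : ι → ℝ, u ⬝ᵥ u = 1 → c ≤ u ⬝ᵥ M *ᵥ u) (v : ι → ℝ) :
    c * (v ⬝ᵥ v) ≤ v ⬝ᵥ M *ᵥ v := by
  rcases eq_or_ne v 0 with rfl | hv
  · simp
  obtain ⟨r, u, hu, rfl⟩ := exists_dotProduct_self_eq_one_and_eq_smul hv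
  simp only [smul_dotProduct, dotProduct_smul, mulVec_smul, smul_eq_mul, hu]
  nlinarith [h u hu, mul_self_nonneg r]

lemma dotProduct_mulVec_le_mul_of_forall_sphere {M : Matrix ι ι ℝ} {C : ℝ}
    (h : ∀ u : ι → ℝ, u ⬝ᵥ u = 1 → u ⬝ᵥ M *ᵥ u ≤ C) (v : ι → ℝ) :
    v ⬝ᵥ M *ᵥ v ≤ C * (v ⬝ᵥ v) := by
  rcases eq_or_ne v 0 with rfl | hv
  · simp
  obtain ⟨r, u, hu, rfl⟩ := exists_dotProduct_self_eq_one_and_eq_smul hv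
  simp only [smul_dotProduct, dotProduct_smul, mulVec_smul, smul_eq_mul, hu]
  nlinarith [h u hu, mul_self_nonneg r]

variable {X : Type*} [TopologicalSpace X] {K : Set X} {P : X → Matrix ι ι ℝ}

lemma ContinuousOn.quadraticForm (hP : ContinuousOn P K) :
    ContinuousOn (fun p : X × (ι → ℝ) => p.2 ⬝ᵥ P p.1 *ᵥ p.2) (K ×ˢ univ) := by
  have hq : Continuous fun q : Matrix ι ι ℝ × (ι → ℝ) => q.2 ⬝ᵥ q.1 *ᵥ q.2 :=
    continuous_snd.dotProduct (continuous_fst.matrix_mulVec continuous_snd)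
  exact hq.comp_continuousOn
    ((hP.comp continuousOn_fst fun p hp => (mem_prod.1 hp).1).prodMk continuousOn_snd)

lemma IsCompact.exists_pos_mul_dotProduct_self_le (hK : IsCompact K) (hP : ContinuousOn P K)
    (hpd : ∀ θ ∈ K, (P θ).PosDef) :
    ∃ c > 0, ∀ θ ∈ K, ∀ v, c * (v ⬝ᵥ v) ≤ v ⬝ᵥ P θ *ᵥ v := by
  obtain ⟨c, hc, hle⟩ := (hK.prod isCompact_setOf_dotProduct_self_eq_one).exists_forall_le'
    (hP.quadraticForm.mono (prod_mono_right (subset_univ _))) (a := 0) fun p hp => by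
      have hu : p.2 ≠ 0 := fun h => by simpa [h] using hp.2
      simpa using (hpd p.1 hp.1).dotProduct_mulVec_pos hu
  exact ⟨c, hc, fun θ hθ =>
    mul_dotProduct_self_le_of_forall_sphere fun u hu => hle (θ, u) ⟨hθ, hu⟩⟩

lemma IsCompact.exists_dotProduct_mulVec_le_mul_dotProduct_self (hK : IsCompact K)
    (hP : ContinuousOn P K) : ∃ C > 0, ∀ θ ∈ K, ∀ v, v ⬝ᵥ P θ *ᵥ v ≤ C * (v ⬝ᵥ v) := by
  obtain ⟨C, hC⟩ := (hK.prod isCompact_setOf_dotProduct_self_eq_one).bddAbove_image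
    (hP.quadraticForm.mono (prod_mono_right (subset_univ _)))
  refine ⟨max C 1, by positivity, fun θ hθ => dotProduct_mulVec_le_mul_of_forall_sphere ?_⟩
  exact fun u hu => (hC (mem_image_of_mem _ (mk_mem_prod hθ hu))).trans (le_max_left _ _)

end QuadraticForm

lemma LinearMap.exists_vertex_apply_ge {ι : Type*} [Fintype ι] (f : (ι → ℝ) →ₗ[ℝ] ℝ)
    {lo hi μ : ι → ℝ} (hμ : μ ∈ Icc lo hi) :
    ∃ μ' : ι → ℝ, (∀ i, μ' i = lo i ∨ μ' i = hi i) ∧ f μ ≤ f μ' := by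
  classical
  set a : ι → ℝ := fun i => f fun j => if i = j then 1 else 0
  refine ⟨fun i => if 0 ≤ a i then hi i else lo i, fun i => by dsimp only; split <;> simp, ?_⟩
  rw [f.pi_apply_eq_sum_univ, f.pi_apply_eq_sum_univ]
  refine Finset.sum_le_sum fun i _ => ?_
  change μ i * a i ≤ (if 0 ≤ a i then hi i else lo i) * a i
  split_ifs with ha
  · exact mul_le_mul_of_nonneg_right (hμ.2 i) ha
  · exact mul_le_mul_of_nonpos_right (hμ.1 i) (le_of_not_ge ha)

section LMI

variable {ι κ : Type*} [Fintype ι] [DecidableEq ι] [Fintype κ]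

lemma dotProduct_mulVec_le_of_posSemidef {M : Matrix ι ι ℝ} {ε : ℝ}
    (h : (-(ε • (1 : Matrix ι ι ℝ)) - M).PosSemidef) (v : ι → ℝ) :
    v ⬝ᵥ M *ᵥ v ≤ -ε * (v ⬝ᵥ v) := by
  have := h.dotProduct_mulVec_nonneg v
  simp only [star_trivial, sub_mulVec, neg_mulVec, smul_mulVec, one_mulVec, dotProduct_sub,
    dotProduct_neg, dotProduct_smul, smul_eq_mul] at this
  linarith

lemma dotProduct_mulVec_le_of_forall_vertex (D : (κ → ℝ) →ₗ[ℝ] Matrix ι ι ℝ)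
    (B : Matrix ι ι ℝ) {ε : ℝ} {lo hi μ : κ → ℝ}
    (h : ∀ μ' : κ → ℝ, (∀ i, μ' i = lo i ∨ μ' i = hi i) →
      (-(ε • (1 : Matrix ι ι ℝ)) - (D μ' + B)).PosSemidef)
    (hμ : μ ∈ Icc lo hi) (v : ι → ℝ) :
    v ⬝ᵥ (D μ + B) *ᵥ v ≤ -ε * (v ⬝ᵥ v) := by
  let f : (κ → ℝ) →ₗ[ℝ] ℝ :=
    LinearMap.applyₗ v ∘ₗ LinearMap.applyₗ v ∘ₗ (toLinearMap₂' ℝ).toLinearMap ∘ₗ D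
  have hf : ∀ μ', f μ' = v ⬝ᵥ D μ' *ᵥ v := fun μ' => toLinearMap₂'_apply' _ _ _
  obtain ⟨μ', hvert, hle⟩ := f.exists_vertex_apply_ge hμ
  have := dotProduct_mulVec_le_of_posSemidef (h μ' hvert) v
  rw [hf, hf] at hle
  rw [add_mulVec, dotProduct_add] at this ⊢
  linarith

end LMI

lemma HasDerivWithinAt.dotProduct_mulVec {ι : Type*} [Fintype ι] {x : ℝ → ι → ℝ}
    {x' : ι → ℝ} {Q : ℝ → Matrix ι ι ℝ} {Q' : Matrix ι ι ℝ} {s : Set ℝ} {t : ℝ}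
    (hx : HasDerivWithinAt x x' s t) (hQ : HasDerivWithinAt Q Q' s t) :
    HasDerivWithinAt (fun τ => x τ ⬝ᵥ Q τ *ᵥ x τ)
      (x' ⬝ᵥ Q t *ᵥ x t + x t ⬝ᵥ Q' *ᵥ x t + x t ⬝ᵥ Q t *ᵥ x') s t := by
  have hxi := hasDerivWithinAt_pi.1 hx
  have hQij := fun i => hasDerivWithinAt_pi.1 (hasDerivWithinAt_pi.1 hQ i)
  refine (HasDerivWithinAt.fun_sum fun i _ =>
    (hxi i).mul (HasDerivWithinAt.fun_sum fun j _ => (hQij i j).mul (hxi j))).congr_deriv ?_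
  simp only [dotProduct, mulVec, Pi.mul_apply, Finset.sum_add_distrib, mul_add]
  ring

lemma mulVec_dotProduct_add_dotProduct_mulVec {ι : Type*} [Fintype ι] (A Q D : Matrix ι ι ℝ)
    (v : ι → ℝ) :
    (A *ᵥ v) ⬝ᵥ Q *ᵥ v + v ⬝ᵥ D *ᵥ v + v ⬝ᵥ Q *ᵥ (A *ᵥ v) =
      v ⬝ᵥ (D + Aᵀ * Q + Q * A) *ᵥ v := by
  rw [add_mulVec, add_mulVec, dotProduct_add, dotProduct_add, ← mulVec_mulVec, ← mulVec_mulVec,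
    dotProduct_mulVec v Aᵀ, vecMul_transpose, dotProduct_comm (A *ᵥ v)]
  ring

lemma HasDerivWithinAt.dotProduct_mulVec_comp {ι E : Type*} [Fintype ι]
    [NormedAddCommGroup E] [NormedSpace ℝ E] {A : Matrix ι ι ℝ} {P : E → Matrix ι ι ℝ}
    {ρ : ℝ → E} {ρ' : E} {x : ℝ → ι → ℝ} {s : Set ℝ} {t : ℝ}
    (hx : HasDerivWithinAt x (A *ᵥ x t) s t) (hP : DifferentiableAt ℝ P (ρ t))
    (hρ : HasDerivWithinAt ρ ρ' s t) :
    HasDerivWithinAt (fun τ => x τ ⬝ᵥ P (ρ τ) *ᵥ x τ)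
      (x t ⬝ᵥ (fderiv ℝ P (ρ t) ρ' + Aᵀ * P (ρ t) + P (ρ t) * A) *ᵥ x t) s t := by
  rw [← mulVec_dotProduct_add_dotProduct_mulVec]
  exact hx.dotProduct_mulVec (hP.hasFDerivAt.comp_hasDerivWithinAt t hρ)

open Real in
lemma le_mul_exp_of_hasDerivWithinAt_le_neg_mul {V V' : ℝ → ℝ} {k : ℝ}
    (hV : ∀ t ≥ 0, HasDerivWithinAt V (V' t) (Ici 0) t) (hV' : ∀ t ≥ 0, V' t ≤ -k * V t)
    {t : ℝ} (ht : 0 ≤ t) : V t ≤ V 0 * exp (-k * t) := by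
  have hg : ∀ τ ≥ 0, HasDerivWithinAt (fun s => exp (k * s) * V s)
      (exp (k * τ) * k * V τ + exp (k * τ) * V' τ) (Ici 0) τ := fun τ hτ => by
    simpa using ((hasDerivAt_id τ).const_mul k).exp.hasDerivWithinAt.fun_mul (hV τ hτ)
  have hanti : AntitoneOn (fun s => exp (k * s) * V s) (Ici 0) := by
    refine antitoneOn_of_hasDerivWithinAt_nonpos (convex_Ici 0)
      (fun τ hτ => (hg τ hτ).continuousWithinAt) (fun τ hτ => (hg τ ?_).mono interior_subset)
      fun τ hτ => ?_
    · exact interior_subset hτ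
    · have := hV' τ (interior_subset hτ)
      nlinarith [exp_pos (k * τ)]
  have h := hanti self_mem_Ici ht ht
  simp only [mul_zero, exp_zero, one_mul] at h
  calc V t = exp (-k * t) * (exp (k * t) * V t) := by
        rw [← mul_assoc, ← exp_add]; simp
    _ ≤ exp (-k * t) * V 0 := by gcongr
    _ = V 0 * exp (-k * t) := mul_comm _ _

lemma tendsto_zero_of_dotProduct_self_le {ι α : Type*} [Fintype ι] {l : Filter α}
    {x : α → ι → ℝ} {g : α → ℝ} (hg : Tendsto g l (nhds 0))
    (h : ∀ᶠ a in l, x a ⬝ᵥ x a ≤ g a) : Tendsto x l (nhds 0) := by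
  refine tendsto_pi_nhds.2 fun i => squeeze_zero_norm' ?_ (by simpa using hg.sqrt)
  filter_upwards [h] with a ha
  exact Real.abs_le_sqrt <|
    (sq (x a i)).trans_le ((mul_self_le_dotProduct_self (x a) i).trans ha)

theorem robust_stability_general
    {n N : ℕ}
    -- the parameter box 𝒫 = [ρlo, ρhi] and the derivative box 𝒟 = [νlo, νhi]
    (ρlo ρhi νlo νhi : Fin N → ℝ)
    -- the system matrix, continuous (hence bounded) on the compact box 𝒫
    (A : (Fin N → ℝ) → Matrix (Fin n) (Fin n) ℝ)
    -- the Lyapunov certificate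
    (ε : ℝ) (hε : 0 < ε)
    (P : (Fin N → ℝ) → Matrix (Fin n) (Fin n) ℝ)
    (hP_c1 : ContDiff ℝ 1 P)
    (hP_pd : ∀ θ ∈ Icc ρlo ρhi, (P θ).PosDef)
    -- the robust stability LMI: ∂_ρP(θ)μ + A(θ)ᵀP(θ) + P(θ)A(θ) ⪯ −εIₙ on 𝒫 × 𝒟ᵛ
    (hLMI : ∀ θ ∈ Icc ρlo ρhi,
      ∀ μ : Fin N → ℝ, (∀ i, μ i = νlo i ∨ μ i = νhi i) →
      (-(ε • (1 : Matrix (Fin n) (Fin n) ℝ))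
        - (fderiv ℝ P θ μ + (A θ)ᵀ * P θ + P θ * A θ)).PosSemidef)
    -- a continuously differentiable parameter trajectory valued in 𝒫 with derivative in 𝒟
    (ρ ρ' : ℝ → Fin N → ℝ)
    (hρP : ∀ t ≥ (0 : ℝ), ρ t ∈ Icc ρlo ρhi)
    (hρdiff : ∀ t ≥ (0 : ℝ), HasDerivWithinAt ρ (ρ' t) (Ici 0) t)
    (hρ'D : ∀ t ≥ (0 : ℝ), ρ' t ∈ Icc νlo νhi)
    -- a continuously differentiable solution of the LPV system
    (x : ℝ → Fin n → ℝ)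
    (hxdiff : ∀ t ≥ (0 : ℝ), HasDerivWithinAt x ((A (ρ t)).mulVec (x t)) (Ici 0) t) :
    Tendsto x atTop (nhds 0) := by
  obtain ⟨c, hc, hPlow⟩ :=
    isCompact_Icc.exists_pos_mul_dotProduct_self_le hP_c1.continuous.continuousOn hP_pd
  obtain ⟨C, hC, hPupp⟩ := isCompact_Icc.exists_dotProduct_mulVec_le_mul_dotProduct_self
    (K := Icc ρlo ρhi) hP_c1.continuous.continuousOn
  set V := fun t => x t ⬝ᵥ P (ρ t) *ᵥ x t
  have hV : ∀ t ≥ 0, HasDerivWithinAt V (x t ⬝ᵥ (fderiv ℝ P (ρ t) (ρ' t)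
      + (A (ρ t))ᵀ * P (ρ t) + P (ρ t) * A (ρ t)) *ᵥ x t) (Ici 0) t := fun t ht =>
    (hxdiff t ht).dotProduct_mulVec_comp (hP_c1.differentiable one_ne_zero _) (hρdiff t ht)
  have hV' : ∀ t ≥ 0, x t ⬝ᵥ (fderiv ℝ P (ρ t) (ρ' t)
      + (A (ρ t))ᵀ * P (ρ t) + P (ρ t) * A (ρ t)) *ᵥ x t ≤ -(ε / C) * V t := fun t ht => by
    have hdiss := dotProduct_mulVec_le_of_forall_vertex (fderiv ℝ P (ρ t)).toLinearMap
      ((A (ρ t))ᵀ * P (ρ t) + P (ρ t) * A (ρ t))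
      (fun μ hμ => by rw [← add_assoc]; exact hLMI _ (hρP t ht) μ hμ) (hρ'D t ht) (x t)
    rw [← add_assoc] at hdiss
    have hVle : V t / C ≤ x t ⬝ᵥ x t :=
      (div_le_iff₀ hC).2 (by linarith [hPupp _ (hρP t ht) (x t)])
    calc _ ≤ -ε * (x t ⬝ᵥ x t) := hdiss
      _ ≤ -ε * (V t / C) := mul_le_mul_of_nonpos_left hVle (neg_nonpos.2 hε.le)
      _ = -(ε / C) * V t := by ring
  refine tendsto_zero_of_dotProduct_self_le
    (g := fun t => V 0 / c * Real.exp (-(ε / C) * t)) ?_ ?_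
  · simpa using ((Real.tendsto_exp_atBot.comp
      (tendsto_id.const_mul_atTop_of_neg (neg_lt_zero.2 (div_pos hε hC)))).const_mul (V 0 / c))
  · filter_upwards [eventually_ge_atTop 0] with t ht
    rw [div_mul_eq_mul_div, le_div_iff₀ hc, mul_comm]
    exact (hPlow _ (hρP t ht) (x t)).trans (le_mul_exp_of_hasDerivWithinAt_le_neg_mul hV hV' ht)

theorem robust_stability
    {n N : ℕ}
    -- the parameter box 𝒫 = [ρlo, ρhi] and the derivative box 𝒟 = [νlo, νhi]
    (ρlo ρhi νlo νhi : Fin N → ℝ)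
    (hbox : ρlo ≤ ρhi) (hνbox : νlo ≤ νhi)
    -- the system matrix, continuous (hence bounded) on the compact box 𝒫
    (A : (Fin N → ℝ) → Matrix (Fin n) (Fin n) ℝ)
    (hA : ContinuousOn A (Icc ρlo ρhi))
    -- the Lyapunov certificate
    (ε : ℝ) (hε : 0 < ε)
    (P : (Fin N → ℝ) → Matrix (Fin n) (Fin n) ℝ)
    (hP_c1 : ContDiff ℝ 1 P)
    (hP_symm : ∀ θ, (P θ).IsSymm)
    (hP_pd : ∀ θ ∈ Icc ρlo ρhi, (P θ).PosDef)
    -- the robust stability LMI: ∂_ρP(θ)μ + A(θ)ᵀP(θ) + P(θ)A(θ) ⪯ −εIₙ on 𝒫 × 𝒟ᵛ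
    (hLMI : ∀ θ ∈ Icc ρlo ρhi,
      ∀ μ : Fin N → ℝ, (∀ i, μ i = νlo i ∨ μ i = νhi i) →
      (-(ε • (1 : Matrix (Fin n) (Fin n) ℝ))
        - (fderiv ℝ P θ μ + (A θ)ᵀ * P θ + P θ * A θ)).PosSemidef)
    -- a continuously differentiable parameter trajectory valued in 𝒫 with derivative in 𝒟
    (ρ ρ' : ℝ → Fin N → ℝ)
    (hρP : ∀ t ≥ (0 : ℝ), ρ t ∈ Icc ρlo ρhi)
    (hρdiff : ∀ t ≥ (0 : ℝ), HasDerivWithinAt ρ (ρ' t) (Ici 0) t)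
    (hρ'cont : ContinuousOn ρ' (Ici 0))
    (hρ'D : ∀ t ≥ (0 : ℝ), ρ' t ∈ Icc νlo νhi)
    -- a continuously differentiable solution of the LPV system
    (x : ℝ → Fin n → ℝ)
    (hxdiff : ∀ t ≥ (0 : ℝ), HasDerivWithinAt x ((A (ρ t)).mulVec (x t)) (Ici 0) t)
    (hxcont : ContinuousOn x (Ici 0)) :
    Tendsto x atTop (nhds 0) :=
  robust_stability_general ρlo ρhi νlo νhi A ε hε P hP_c1 hP_pd hLMI ρ ρ' hρP hρdiff hρ'D x hxdiff
end
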